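/- arXiv:1212.6830 — 3 statements merged into one kernel-verified Lean document; each statement's English description precedes it below -/
import Mathlib

section
/- Let n ≥ 2 be an integer, a ∈ (−1,1), and μ > n−1. Let F : ℝ → ℝ be smooth with F(−1) = F(1) = 0, F′(−1) = F′(1) = 0 and F ≥ 0 on [−1,1]. Then there exists a constant C > 0 (independent of T) such that for every T > 1, (μ²/2) ∫₀^{T^{1/8}} ∫_{−T}^{T} sech⁴(μt) · y^a cosh^{n−1}(t) dt dy + ∫_{−T}^{T} F(tanh(μt)) cosh^{n−1}(t) dt ≤ C T^{1/4}. -/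
open Real MeasureTheory Set

/-!
Everything rests on `sech² (μ t) cosh^{n-1} t ≤ 4 e^{-|t|}`, true because `2μ ≥ n`, so every
`t`-integral is bounded independently of `T`. The kinetic term then factors as `(μ²/2) ∫ y^a dy`
times such an integral, and `∫₀^{T^{1/8}} y^a dy = T^{(a+1)/8}/(a+1) ≤ T^{1/4}/(a+1)` since `a < 1`.
For the potential term, `F` is Lipschitz on `[-1, 1]` and vanishes at `±1`, so
`|F s| ≤ L (1 - s²)` and `F (tanh x) ≤ L sech² x`.
-/

namespace Real

lemma inv_cosh_le_two_mul_exp_neg_abs (x : ℝ) : 1 / cosh x ≤ 2 * exp (-|x|) := by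
  have h : exp |x| ≤ 2 * cosh x := by
    rw [← cosh_abs, cosh_eq]
    linarith [exp_pos (-|x|)]
  rw [div_le_iff₀ (cosh_pos x), exp_neg]
  field_simp
  linarith

lemma cosh_pow_le_exp_mul_abs (m : ℕ) (x : ℝ) : cosh x ^ m ≤ exp (m * |x|) := by
  rw [exp_nat_mul]
  gcongr
  rw [← cosh_abs, cosh_eq]
  linarith [exp_le_exp.2 (neg_le_self (abs_nonneg x))]

lemma one_sub_tanh_sq (x : ℝ) : 1 - tanh x ^ 2 = (1 / cosh x) ^ 2 := by
  rw [tanh_eq_sinh_div_cosh]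
  field_simp
  linarith [cosh_sq_sub_sinh_sq x]

@[fun_prop]
lemma continuous_tanh : Continuous tanh := by
  simp_rw [funext tanh_eq_sinh_div_cosh]
  exact continuous_sinh.div continuous_cosh fun x => (cosh_pos x).ne'

lemma inv_cosh_mul_sq_mul_cosh_pow_le {m : ℕ} {μ : ℝ} (hμ : (m : ℝ) + 1 ≤ 2 * μ) (t : ℝ) :
    (1 / cosh (μ * t)) ^ 2 * cosh t ^ m ≤ 4 * exp (-|t|) := by
  have hμ0 : 0 ≤ μ := by linarith [m.cast_nonneg (α := ℝ)]
  calc (1 / cosh (μ * t)) ^ 2 * cosh t ^ m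
      ≤ (2 * exp (-|μ * t|)) ^ 2 * exp (m * |t|) := by
        gcongr
        exacts [inv_cosh_le_two_mul_exp_neg_abs _, cosh_pow_le_exp_mul_abs m t]
    _ = 4 * exp ((m - 2 * μ) * |t|) := by
        rw [abs_mul, abs_of_nonneg hμ0, mul_pow, ← exp_nat_mul, mul_assoc, ← exp_add]
        ring_nf
    _ ≤ 4 * exp (-|t|) := by
        gcongr
        nlinarith [abs_nonneg t]

lemma integral_exp_neg_abs : ∫ t : ℝ, exp (-|t|) = 2 := by
  rw [integral_comp_abs (f := fun x => exp (-x)), integral_exp_neg_Ioi_zero, mul_one]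

lemma integrable_exp_neg_abs : Integrable fun t : ℝ => exp (-|t|) :=
  .of_integral_ne_zero (by rw [integral_exp_neg_abs]; norm_num)

end Real

lemma setIntegral_le_of_abs_le_mul_exp_neg_abs {f : ℝ → ℝ} (hf : AEStronglyMeasurable f)
    {c : ℝ} (hfc : ∀ t, |f t| ≤ c * exp (-|t|)) (s : Set ℝ) : ∫ t in s, f t ≤ 2 * c := by
  have hint : Integrable f := (integrable_exp_neg_abs.const_mul c).mono' hf (ae_of_all _ hfc)
  calc ∫ t in s, f t ≤ ∫ t in s, |f t| :=
        integral_mono hint.integrableOn hint.abs.integrableOn fun t => le_abs_self _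
    _ ≤ ∫ t, |f t| := setIntegral_le_integral hint.abs (ae_of_all _ fun t => abs_nonneg _)
    _ ≤ ∫ t, c * exp (-|t|) := integral_mono hint.abs (integrable_exp_neg_abs.const_mul c) hfc
    _ = 2 * c := by rw [integral_const_mul, integral_exp_neg_abs, mul_comm]

lemma LipschitzOnWith.abs_le_mul_one_sub_sq {F : ℝ → ℝ} {K : NNReal}
    (hF : LipschitzOnWith K F (Icc (-1) 1)) (hm1 : F (-1) = 0) (h1 : F 1 = 0) {s : ℝ}
    (hs : s ∈ Icc (-1 : ℝ) 1) : |F s| ≤ K * (1 - s ^ 2) := by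
  have hright : |F s| ≤ K * (1 - s) := by
    simpa [Real.dist_eq, h1, abs_sub_comm s 1, abs_of_nonneg (sub_nonneg.2 hs.2)] using
      hF.dist_le_mul s hs 1 (right_mem_Icc.2 (by norm_num))
  have hleft : |F s| ≤ K * (1 + s) := by
    simpa [Real.dist_eq, hm1, abs_of_nonneg (neg_le_iff_add_nonneg.1 hs.1), add_comm] using
      hF.dist_le_mul s hs (-1) (left_mem_Icc.2 (by norm_num))
  have hK := K.coe_nonneg
  rcases le_total 0 s with h0 | h0
  · nlinarith [mul_nonneg (mul_nonneg hK (sub_nonneg.2 hs.2)) h0]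
  · nlinarith [mul_nonneg (mul_nonneg hK (neg_le_iff_add_nonneg.1 hs.1)) (neg_nonneg.2 h0)]

section Decay

variable {m : ℕ} {μ : ℝ}

lemma setIntegral_inv_cosh_pow_four_mul_cosh_pow_le (hμ : (m : ℝ) + 1 ≤ 2 * μ) (s : Set ℝ) :
    ∫ t in s, (1 / cosh (μ * t)) ^ 4 * cosh t ^ m ≤ 8 := by
  refine le_of_le_of_eq (setIntegral_le_of_abs_le_mul_exp_neg_abs (by fun_prop) (c := 4)
    (fun t => ?_) s) (by norm_num)
  have hsech : 1 / cosh (μ * t) ≤ 1 := by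
    rw [div_le_one (cosh_pos _)]
    exact one_le_cosh _
  calc |(1 / cosh (μ * t)) ^ 4 * cosh t ^ m| = (1 / cosh (μ * t)) ^ 4 * cosh t ^ m :=
        abs_of_nonneg (by positivity)
    _ ≤ (1 / cosh (μ * t)) ^ 2 * cosh t ^ m := by
        gcongr ?_ * _
        exact pow_le_pow_of_le_one (by positivity) hsech (by norm_num)
    _ ≤ 4 * exp (-|t|) := inv_cosh_mul_sq_mul_cosh_pow_le hμ t

lemma integral_Ioo_zero_rpow {a : ℝ} (ha : -1 < a) {S : ℝ} (hS : 0 ≤ S) :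
    ∫ y in Ioo 0 S, y ^ a = S ^ (a + 1) / (a + 1) := by
  rw [← integral_Ioc_eq_integral_Ioo, ← intervalIntegral.integral_of_le hS,
    integral_rpow (Or.inl ha), zero_rpow (by linarith), sub_zero]

lemma integral_Ioo_zero_setIntegral_inv_cosh_pow_four_mul_rpow_le (hμ : (m : ℝ) + 1 ≤ 2 * μ)
    {a : ℝ} (ha : -1 < a) {S : ℝ} (hS : 0 ≤ S) (s : Set ℝ) :
    ∫ y in Ioo 0 S, ∫ t in s, (1 / cosh (μ * t)) ^ 4 * y ^ a * cosh t ^ m ≤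
      8 * S ^ (a + 1) / (a + 1) := by
  have hsplit : ∀ y : ℝ, ∫ t in s, (1 / cosh (μ * t)) ^ 4 * y ^ a * cosh t ^ m =
      y ^ a * ∫ t in s, (1 / cosh (μ * t)) ^ 4 * cosh t ^ m := fun y => by
    rw [← integral_const_mul]
    congr 1 with t
    ring
  simp_rw [hsplit]
  rw [integral_mul_const, integral_Ioo_zero_rpow ha hS, mul_comm, mul_div_assoc]
  gcongr
  · have : 0 < a + 1 := by linarith
    positivity
  · exact setIntegral_inv_cosh_pow_four_mul_cosh_pow_le hμ s

lemma setIntegral_comp_tanh_mul_cosh_pow_le (hμ : (m : ℝ) + 1 ≤ 2 * μ) {F : ℝ → ℝ}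
    (hF : Measurable F) {L : ℝ} (hFL : ∀ s ∈ Icc (-1 : ℝ) 1, |F s| ≤ L * (1 - s ^ 2))
    (s : Set ℝ) : ∫ t in s, F (tanh (μ * t)) * cosh t ^ m ≤ 8 * L := by
  have hL : 0 ≤ L := by simpa using (abs_nonneg _).trans (hFL 0 (by norm_num))
  refine le_of_le_of_eq (setIntegral_le_of_abs_le_mul_exp_neg_abs
    ((hF.comp (by fun_prop)).mul (by fun_prop)).aestronglyMeasurable (c := 4 * L)
    (fun t => ?_) s) (by ring)
  have htanh : tanh (μ * t) ∈ Icc (-1 : ℝ) 1 := ⟨(neg_one_lt_tanh _).le, (tanh_lt_one _).le⟩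
  calc |F (tanh (μ * t)) * cosh t ^ m| = |F (tanh (μ * t))| * cosh t ^ m := by
        rw [abs_mul, abs_of_nonneg (by positivity : 0 ≤ cosh t ^ m)]
    _ ≤ L * (1 / cosh (μ * t)) ^ 2 * cosh t ^ m := by
        gcongr
        rw [← one_sub_tanh_sq]
        exact hFL _ htanh
    _ ≤ L * (4 * exp (-|t|)) := by
        rw [mul_assoc]
        exact mul_le_mul_of_nonneg_left (inv_cosh_mul_sq_mul_cosh_pow_le hμ t) hL
    _ = 4 * L * exp (-|t|) := by ring

end Decay

theorem stmt4_general (n : ℕ) (hn : 2 ≤ n) (a : ℝ) (ha : a ∈ Set.Ioo (-1:ℝ) 1)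
    (μ : ℝ) (hμ : (n : ℝ) - 1 < μ)
    (F : ℝ → ℝ) (hFs : ContDiff ℝ (⊤ : ℕ∞) F)
    (hFm1 : F (-1) = 0) (hF1 : F 1 = 0) :
    ∃ C : ℝ, 0 < C ∧ ∀ T : ℝ, 1 < T →
      μ ^ 2 / 2 * (∫ y in Set.Ioo (0:ℝ) (T ^ ((1:ℝ)/8)), ∫ t in Set.Ioo (-T) T,
          (1 / Real.cosh (μ * t)) ^ 4 * y ^ a * Real.cosh t ^ (n - 1)) +
        (∫ t in Set.Ioo (-T) T, F (Real.tanh (μ * t)) * Real.cosh t ^ (n - 1)) ≤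
      C * T ^ ((1:ℝ)/4) := by
  have hμ' : ((n - 1 : ℕ) : ℝ) + 1 ≤ 2 * μ := by
    have : (2 : ℝ) ≤ n := by exact_mod_cast hn
    rw [Nat.cast_sub (by omega), Nat.cast_one]
    linarith
  obtain ⟨K, hK⟩ :=
    hFs.contDiffOn.exists_lipschitzOnWith (by simp) (convex_Icc (-1 : ℝ) 1) isCompact_Icc
  have ha1 : 0 < a + 1 := by linarith [ha.1]
  refine ⟨4 * μ ^ 2 / (a + 1) + 8 * K + 1, by positivity, fun T hT => ?_⟩
  have hT0 : 0 ≤ T := by linarith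
  have hpow : (T ^ (1 / 8 : ℝ)) ^ (a + 1) ≤ T ^ (1 / 4 : ℝ) := by
    rw [← rpow_mul hT0]
    exact rpow_le_rpow_of_exponent_le hT.le (by linarith [ha.2])
  have hT14 : 1 ≤ T ^ (1 / 4 : ℝ) := one_le_rpow hT.le (by norm_num)
  have hkin := integral_Ioo_zero_setIntegral_inv_cosh_pow_four_mul_rpow_le hμ' ha.1
    (rpow_nonneg hT0 (1 / 8)) (Ioo (-T) T)
  have hpot := setIntegral_comp_tanh_mul_cosh_pow_le hμ' hFs.continuous.measurable
    (fun s hs => hK.abs_le_mul_one_sub_sq hFm1 hF1 hs) (Ioo (-T) T)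
  calc _ ≤ μ ^ 2 / 2 * (8 * T ^ (1 / 4 : ℝ) / (a + 1)) + 8 * K := by
        gcongr
        exact hkin.trans (by gcongr)
    _ = 4 * μ ^ 2 / (a + 1) * T ^ (1 / 4 : ℝ) + 8 * K := by ring
    _ ≤ _ := by nlinarith [K.coe_nonneg]

/-- Upper bound, uniform in `T > 1`, for the reduced energy of the comparison function
`v(t,y) = tanh(μt)` on the box `Q_T^+ = (-T,T) × (0,T^{1/8})`:
`(μ²/2) ∫₀^{T^{1/8}} ∫_{-T}^{T} sech⁴(μt) y^a cosh^{n-1} t dt dy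
  + ∫_{-T}^{T} F(tanh(μt)) cosh^{n-1} t dt ≤ C T^{1/4}`. -/
theorem stmt4 (n : ℕ) (hn : 2 ≤ n) (a : ℝ) (ha : a ∈ Set.Ioo (-1:ℝ) 1)
    (μ : ℝ) (hμ : (n : ℝ) - 1 < μ)
    (F : ℝ → ℝ) (hFs : ContDiff ℝ (⊤ : ℕ∞) F)
    (hFm1 : F (-1) = 0) (hF1 : F 1 = 0)
    (hdm1 : deriv F (-1) = 0) (hd1 : deriv F 1 = 0)
    (hFpos : ∀ s ∈ Set.Icc (-1:ℝ) 1, 0 ≤ F s) :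
    ∃ C : ℝ, 0 < C ∧ ∀ T : ℝ, 1 < T →
      μ ^ 2 / 2 * (∫ y in Set.Ioo (0:ℝ) (T ^ ((1:ℝ)/8)), ∫ t in Set.Ioo (-T) T,
          (1 / Real.cosh (μ * t)) ^ 4 * y ^ a * Real.cosh t ^ (n - 1)) +
        (∫ t in Set.Ioo (-T) T, F (Real.tanh (μ * t)) * Real.cosh t ^ (n - 1)) ≤
      C * T ^ ((1:ℝ)/4) :=
  stmt4_general n hn a ha μ hμ F hFs hFm1 hF1
end

section
/- Let u : ℝ × (0,∞) → ℝ be three times continuously differentiable with H_a u = 0 on ℝ × (0,∞), extending continuously together with ∂_t u to ℝ × [0,∞), with t ↦ u(t,0) differentiable, and such that for every t ∈ ℝ: lim_{y→0⁺} y^a ∂_y u(t,y) = −(1/d_γ) f(u(t,0)), lim_{y→∞} y^a ∂_y u(t,y) ∂_t u(t,y) = 0, and lim_{y→0⁺} y^a ∂_y u(t,y) ∂_t u(t,y) = −(1/d_γ) f(u(t,0)) ∂_t u(t,0). Assume that for every compact interval I ⊂ ℝ there is an integrable function g : (0,∞) → ℝ such that y^a(|∂_t u|² + |∂_y u|² +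 |∂_t u||∂_{tt}u| + |∂_y u||∂_{ty}u|)(t,y) ≤ g(y) for all t ∈ I and y > 0. Define V(t) = (1/2) ∫₀^∞ y^a ((∂_t u(t,y))² − (∂_y u(t,y))²) dy − (1/d_γ)(F(u(t,0)) − F(1)). Then V is differentiable on ℝ and V′(t) = −(n−1) tanh(t) ∫₀^∞ y^a (∂_t u(t,y))² dy for every t ∈ ℝ. -/
/-!
Differentiating under the integral sign (justified by the domination hypothesis),
`V'(t) = ∫₀^∞ y^a (∂_t u ∂_tt u - ∂_y u ∂_ty u) dy - (1/d_γ) F'(u(t,0)) ∂_t u(t,0)`.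
By `H_a u = 0`, the integrand plus `(n-1) tanh t · y^a (∂_t u)²` is `-∂_y (y^a ∂_y u ∂_t u)`,
so the fundamental theorem of calculus on `(0, ∞)` and the boundary limits at `0⁺` and `∞`
make its integral equal to the trace term `(1/d_γ) F'(u(t,0)) ∂_t u(t,0)`, which cancels.
-/

open Real Filter MeasureTheory Set Topology

noncomputable def pt (u : ℝ → ℝ → ℝ) (t y : ℝ) : ℝ := deriv (fun s => u s y) t
noncomputable def py (u : ℝ → ℝ → ℝ) (t y : ℝ) : ℝ := deriv (fun z => u t z) y
noncomputable def ptt (u : ℝ → ℝ → ℝ) (t y : ℝ) : ℝ := deriv (fun s => pt u s y) t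
noncomputable def pyy (u : ℝ → ℝ → ℝ) (t y : ℝ) : ℝ := deriv (fun z => py u t z) y
noncomputable def pty (u : ℝ → ℝ → ℝ) (t y : ℝ) : ℝ := deriv (fun z => pt u t z) y

/-- The degenerate elliptic operator `H_a u = u_yy + (a/y) u_y + u_tt + (n-1) tanh t · u_t`. -/
noncomputable def Ha (n : ℕ) (a : ℝ) (u : ℝ → ℝ → ℝ) (t y : ℝ) : ℝ :=
  pyy u t y + (a / y) * py u t y + ptt u t y + ((n : ℝ) - 1) * Real.tanh t * pt u t y

/-- The normalizing constant `d_γ = 2^{2γ-1} Γ(γ)/Γ(1-γ)` of the extension problem. -/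
noncomputable def dgamma (γ : ℝ) : ℝ :=
  2 ^ (2 * γ - 1) * Real.Gamma γ / Real.Gamma (1 - γ)

/-- The Hamiltonian quantity
`V(t) = (1/2)∫₀^∞ y^a ((∂_t u)² - (∂_y u)²) dy - (1/d_γ)(F(u(t,0)) - F(1))`. -/
noncomputable def Vham (a dγ : ℝ) (F : ℝ → ℝ) (u : ℝ → ℝ → ℝ) (t : ℝ) : ℝ :=
  (1/2) * (∫ y in Set.Ioi (0:ℝ), y ^ a * ((pt u t y) ^ 2 - (py u t y) ^ 2)) -
    (1/dγ) * (F (u t 0) - F 1)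

theorem integral_Ioi_of_hasDerivAt_of_tendsto_nhdsGT {E : Type*} [NormedAddCommGroup E]
    [NormedSpace ℝ E] [CompleteSpace E] {f f' : ℝ → E} {a : ℝ} {l m : E}
    (hderiv : ∀ x ∈ Ioi a, HasDerivAt f (f' x) x) (f'int : IntegrableOn f' (Ioi a))
    (hl : Tendsto f (𝓝[>] a) (𝓝 l)) (hm : Tendsto f atTop (𝓝 m)) :
    ∫ x in Ioi a, f' x = m - l := by
  have heq : ∀ x ∈ Ioi a, Function.update f a l x = f x :=
    fun x hx => Function.update_of_ne (ne_of_gt hx) _ _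
  have h := integral_Ioi_of_hasDerivAt_of_tendsto (f := Function.update f a l) (m := m) ?_
    (fun x hx => ?_) f'int ?_
  · simpa using h
  · rw [← continuousWithinAt_Ioi_iff_Ici, ContinuousWithinAt, Function.update_self]
    exact hl.congr' (eventually_nhdsWithin_of_forall fun x hx => (heq x hx).symm)
  · exact (hderiv x hx).congr_of_eventuallyEq (eventually_of_mem (Ioi_mem_nhds hx) heq)
  · exact hm.congr' ((eventually_gt_atTop a).mono fun x hx => (heq x hx).symm)

theorem MeasureTheory.IntegrableOn.of_continuousOn_of_abs_le {f g : ℝ → ℝ} {s : Set ℝ}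
    (hs : MeasurableSet s) (hg : IntegrableOn g s) (hf : ContinuousOn f s)
    (hfg : ∀ x ∈ s, |f x| ≤ g x) :
    IntegrableOn f s :=
  hg.mono' (hf.aestronglyMeasurable hs) ((ae_restrict_iff' hs).2 (ae_of_all _ hfg))

section Partials

variable {E : Type*} [NormedAddCommGroup E] [NormedSpace ℝ E] {f : ℝ × ℝ → E}
  {U : Set (ℝ × ℝ)}

noncomputable def partialFst (f : ℝ × ℝ → E) (p : ℝ × ℝ) : E := fderiv ℝ f p (1, 0)

noncomputable def partialSnd (f : ℝ × ℝ → E) (p : ℝ × ℝ) : E := fderiv ℝ f p (0, 1)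

theorem DifferentiableAt.hasDerivAt_partialFst {t y : ℝ} (hf : DifferentiableAt ℝ f (t, y)) :
    HasDerivAt (fun s => f (s, y)) (partialFst f (t, y)) t :=
  hf.hasFDerivAt.comp_hasDerivAt t ((hasDerivAt_id t).prodMk (hasDerivAt_const t y))

theorem DifferentiableAt.hasDerivAt_partialSnd {t y : ℝ} (hf : DifferentiableAt ℝ f (t, y)) :
    HasDerivAt (fun z => f (t, z)) (partialSnd f (t, y)) y :=
  hf.hasFDerivAt.comp_hasDerivAt y ((hasDerivAt_const y t).prodMk (hasDerivAt_id y))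

theorem ContDiffOn.partialFst {m n : WithTop ℕ∞} (hf : ContDiffOn ℝ n f U) (hU : IsOpen U)
    (hmn : m + 1 ≤ n) : ContDiffOn ℝ m (partialFst f) U :=
  (hf.fderiv_of_isOpen hU hmn).clm_apply contDiffOn_const

theorem ContDiffOn.partialSnd {m n : WithTop ℕ∞} (hf : ContDiffOn ℝ n f U) (hU : IsOpen U)
    (hmn : m + 1 ≤ n) : ContDiffOn ℝ m (partialSnd f) U :=
  (hf.fderiv_of_isOpen hU hmn).clm_apply contDiffOn_const

theorem partialFst_partialSnd_eq (hf : ContDiffOn ℝ 2 f U) (hU : IsOpen U) {p : ℝ × ℝ}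
    (hp : p ∈ U) : partialFst (partialSnd f) p = partialSnd (partialFst f) p := by
  have hf2 : ContDiffAt ℝ 2 f p := hf.contDiffAt (hU.mem_nhds hp)
  have hd : DifferentiableAt ℝ (fderiv ℝ f) p :=
    (hf2.fderiv_right (m := 1) le_rfl).differentiableAt one_ne_zero
  have hslice : ∀ v w : ℝ × ℝ,
      fderiv ℝ (fun q => fderiv ℝ f q w) p v = fderiv ℝ (fderiv ℝ f) p v w :=
    fun v w => by simp [fderiv_clm_apply hd (differentiableAt_const w)]
  change fderiv ℝ (fun q => fderiv ℝ f q (0, 1)) p (1, 0) =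
    fderiv ℝ (fun q => fderiv ℝ f q (1, 0)) p (0, 1)
  rw [hslice, hslice]
  exact hf2.isSymmSndFDerivAt (by simp) _ _

end Partials

theorem isOpen_setOf_snd_pos : IsOpen {p : ℝ × ℝ | 0 < p.2} :=
  isOpen_lt continuous_const continuous_snd

theorem ContinuousOn.comp_mk_of_snd_pos {g : ℝ × ℝ → ℝ} (hg : ContinuousOn g {p | 0 < p.2})
    (t : ℝ) : ContinuousOn (fun y => g (t, y)) (Ioi 0) :=
  hg.comp (Continuous.prodMk_right t).continuousOn fun _ hy => hy

section Slices

open Function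

variable {u : ℝ → ℝ → ℝ} {t y : ℝ} (hu : ContDiffOn ℝ 2 (uncurry u) {p | 0 < p.2})
include hu

theorem contDiffOn_partialFst_uncurry :
    ContDiffOn ℝ 1 (partialFst (uncurry u)) {p | 0 < p.2} :=
  hu.partialFst isOpen_setOf_snd_pos (by norm_num)

theorem contDiffOn_partialSnd_uncurry :
    ContDiffOn ℝ 1 (partialSnd (uncurry u)) {p | 0 < p.2} :=
  hu.partialSnd isOpen_setOf_snd_pos (by norm_num)

theorem differentiableAt_partialFst_uncurry (hy : 0 < y) :
    DifferentiableAt ℝ (partialFst (uncurry u)) (t, y) :=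
  ((contDiffOn_partialFst_uncurry hu).contDiffAt
    (isOpen_setOf_snd_pos.mem_nhds hy)).differentiableAt one_ne_zero

theorem differentiableAt_partialSnd_uncurry (hy : 0 < y) :
    DifferentiableAt ℝ (partialSnd (uncurry u)) (t, y) :=
  ((contDiffOn_partialSnd_uncurry hu).contDiffAt
    (isOpen_setOf_snd_pos.mem_nhds hy)).differentiableAt one_ne_zero

theorem pt_eq_partialFst (hy : 0 < y) : pt u t y = partialFst (uncurry u) (t, y) :=
  (((hu.contDiffAt (isOpen_setOf_snd_pos.mem_nhds hy)).differentiableAt two_ne_zero)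
    |>.hasDerivAt_partialFst).deriv

theorem py_eq_partialSnd (hy : 0 < y) : py u t y = partialSnd (uncurry u) (t, y) :=
  (((hu.contDiffAt (isOpen_setOf_snd_pos.mem_nhds hy)).differentiableAt two_ne_zero)
    |>.hasDerivAt_partialSnd).deriv

theorem hasDerivAt_pt_fst' (hy : 0 < y) :
    HasDerivAt (fun s => pt u s y) (partialFst (partialFst (uncurry u)) (t, y)) t := by
  simp only [pt_eq_partialFst hu hy]
  exact (differentiableAt_partialFst_uncurry hu hy).hasDerivAt_partialFst

theorem hasDerivAt_pt_snd' (hy : 0 < y) :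
    HasDerivAt (fun z => pt u t z) (partialSnd (partialFst (uncurry u)) (t, y)) y :=
  (differentiableAt_partialFst_uncurry hu hy).hasDerivAt_partialSnd.congr_of_eventuallyEq
    (eventually_of_mem (Ioi_mem_nhds hy) fun _ hz => pt_eq_partialFst hu hz)

theorem hasDerivAt_pt_fst (hy : 0 < y) : HasDerivAt (fun s => pt u s y) (ptt u t y) t :=
  (hasDerivAt_pt_fst' hu hy).differentiableAt.hasDerivAt

theorem hasDerivAt_pt_snd (hy : 0 < y) : HasDerivAt (fun z => pt u t z) (pty u t y) y :=
  (hasDerivAt_pt_snd' hu hy).differentiableAt.hasDerivAt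

theorem hasDerivAt_py_snd (hy : 0 < y) : HasDerivAt (fun z => py u t z) (pyy u t y) y :=
  ((differentiableAt_partialSnd_uncurry hu hy).hasDerivAt_partialSnd.congr_of_eventuallyEq
    (eventually_of_mem (Ioi_mem_nhds hy) fun _ hz => py_eq_partialSnd hu hz))
    |>.differentiableAt.hasDerivAt

/-- `pty u` is defined as `∂_y ∂_t u`; here it appears as `∂_t ∂_y u`, by symmetry of the
mixed partials. -/
theorem hasDerivAt_py_fst (hy : 0 < y) : HasDerivAt (fun s => py u s y) (pty u t y) t := by
  have hmem : (t, y) ∈ {p : ℝ × ℝ | 0 < p.2} := hy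
  rw [pty, (hasDerivAt_pt_snd' hu hy).deriv,
    ← partialFst_partialSnd_eq hu isOpen_setOf_snd_pos hmem]
  simp only [py_eq_partialSnd hu hy]
  exact (differentiableAt_partialSnd_uncurry hu hy).hasDerivAt_partialFst

theorem continuousOn_pt : ContinuousOn (pt u t) (Ioi 0) :=
  ((contDiffOn_partialFst_uncurry hu).continuousOn.comp_mk_of_snd_pos t).congr
    fun _ hy => pt_eq_partialFst hu hy

theorem continuousOn_py : ContinuousOn (py u t) (Ioi 0) :=
  ((contDiffOn_partialSnd_uncurry hu).continuousOn.comp_mk_of_snd_pos t).congr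
    fun _ hy => py_eq_partialSnd hu hy

theorem continuousOn_ptt : ContinuousOn (ptt u t) (Ioi 0) :=
  (((contDiffOn_partialFst_uncurry hu).partialFst (m := 0) isOpen_setOf_snd_pos le_rfl)
    |>.continuousOn.comp_mk_of_snd_pos t).congr
    fun _ hy => (hasDerivAt_pt_fst' hu hy).deriv

theorem continuousOn_pty : ContinuousOn (pty u t) (Ioi 0) :=
  (((contDiffOn_partialFst_uncurry hu).partialSnd (m := 0) isOpen_setOf_snd_pos le_rfl)
    |>.continuousOn.comp_mk_of_snd_pos t).congr
    fun _ hy => (hasDerivAt_pt_snd' hu hy).deriv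

end Slices

section EnergyBounds

variable {p q r s w : ℝ}

theorem abs_mul_sq_sub_sq_le (hw : 0 ≤ w) :
    |w * (p ^ 2 - q ^ 2)| ≤ w * (|p| ^ 2 + |q| ^ 2 + |p| * |r| + |q| * |s|) := by
  rw [abs_mul, abs_of_nonneg hw]
  gcongr
  calc |p ^ 2 - q ^ 2| ≤ |p| ^ 2 + |q| ^ 2 := by
        rw [← abs_pow, ← abs_pow]; exact abs_sub _ _
    _ ≤ _ := by nlinarith [abs_nonneg p, abs_nonneg q, abs_nonneg r, abs_nonneg s]

theorem abs_mul_mul_sub_mul_le (hw : 0 ≤ w) :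
    |w * (p * r - q * s)| ≤ w * (|p| ^ 2 + |q| ^ 2 + |p| * |r| + |q| * |s|) := by
  rw [abs_mul, abs_of_nonneg hw]
  gcongr
  calc |p * r - q * s| ≤ |p| * |r| + |q| * |s| := by
        rw [← abs_mul, ← abs_mul]; exact abs_sub _ _
    _ ≤ _ := by nlinarith [abs_nonneg p, abs_nonneg q]

theorem abs_mul_sq_le (hw : 0 ≤ w) :
    |w * p ^ 2| ≤ w * (|p| ^ 2 + |q| ^ 2 + |p| * |r| + |q| * |s|) := by
  rw [abs_mul, abs_of_nonneg hw, abs_pow]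
  gcongr
  nlinarith [abs_nonneg p, abs_nonneg q, abs_nonneg r, abs_nonneg s]

end EnergyBounds

theorem continuousOn_rpow_const_Ioi (a : ℝ) : ContinuousOn (fun y : ℝ => y ^ a) (Ioi 0) :=
  continuousOn_id.rpow_const fun _ hy => Or.inl (ne_of_gt hy)

section WeightedEnergy

open Function

variable {a : ℝ} {u : ℝ → ℝ → ℝ} {g : ℝ → ℝ} (hu : ContDiffOn ℝ 2 (uncurry u) {p | 0 < p.2})
include hu

theorem hasDerivAt_integral_rpow_mul_sq_sub_sq {t₀ : ℝ} {s : Set ℝ} (hs : s ∈ 𝓝 t₀)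
    (hg : IntegrableOn g (Ioi 0))
    (hbound : ∀ t ∈ s, ∀ y : ℝ, 0 < y → y ^ a * (|pt u t y| ^ 2 + |py u t y| ^ 2 +
      |pt u t y| * |ptt u t y| + |py u t y| * |pty u t y|) ≤ g y) :
    HasDerivAt (fun t => ∫ y in Ioi 0, y ^ a * (pt u t y ^ 2 - py u t y ^ 2))
      (2 * ∫ y in Ioi 0, y ^ a * (pt u t₀ y * ptt u t₀ y - py u t₀ y * pty u t₀ y)) t₀ := by
  have hcont : ∀ t, ContinuousOn (fun y => y ^ a * (pt u t y ^ 2 - py u t y ^ 2)) (Ioi 0) :=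
    fun t => (continuousOn_rpow_const_Ioi a).mul
      (((continuousOn_pt hu).pow 2).sub ((continuousOn_py hu).pow 2))
  have hcont_deriv : ContinuousOn
      (fun y => 2 * (y ^ a * (pt u t₀ y * ptt u t₀ y - py u t₀ y * pty u t₀ y))) (Ioi 0) :=
    continuousOn_const.mul ((continuousOn_rpow_const_Ioi a).mul
      (((continuousOn_pt hu).mul (continuousOn_ptt hu)).sub
        ((continuousOn_py hu).mul (continuousOn_pty hu))))
  rw [← integral_const_mul]
  refine (hasDerivAt_integral_of_dominated_loc_of_deriv_le hs (bound := fun y => 2 * g y)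
    (F' := fun t y => 2 * (y ^ a * (pt u t y * ptt u t y - py u t y * pty u t y)))
    (Eventually.of_forall fun t => (hcont t).aestronglyMeasurable measurableSet_Ioi)
    (IntegrableOn.of_continuousOn_of_abs_le measurableSet_Ioi hg (hcont t₀) fun y hy =>
      (abs_mul_sq_sub_sq_le (rpow_nonneg (le_of_lt hy) a)).trans
        (hbound t₀ (mem_of_mem_nhds hs) y hy))
    (hcont_deriv.aestronglyMeasurable measurableSet_Ioi) ?_ (hg.const_mul 2) ?_).2
  · refine (ae_restrict_iff' measurableSet_Ioi).2 (ae_of_all _ fun y hy t ht => ?_)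
    rw [norm_mul, Real.norm_two, Real.norm_eq_abs]
    exact mul_le_mul_of_nonneg_left
      ((abs_mul_mul_sub_mul_le (rpow_nonneg (le_of_lt hy) a)).trans (hbound t ht y hy))
      zero_le_two
  · refine (ae_restrict_iff' measurableSet_Ioi).2 (ae_of_all _ fun y hy t _ => ?_)
    refine ((((hasDerivAt_pt_fst hu hy).pow 2).sub
      ((hasDerivAt_py_fst hu hy).pow 2)).const_mul (y ^ a)).congr_deriv ?_
    push_cast
    ring

theorem hasDerivAt_rpow_mul_py_mul_pt {n : ℕ} {t y : ℝ} (hy : 0 < y) (hH : Ha n a u t y = 0) :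
    HasDerivAt (fun z => z ^ a * py u t z * pt u t z)
      (-(y ^ a * (pt u t y * ptt u t y - py u t y * pty u t y) +
        ((n : ℝ) - 1) * tanh t * (y ^ a * pt u t y ^ 2))) y := by
  have hpyy : pyy u t y =
      -(a / y * py u t y) - ptt u t y - ((n : ℝ) - 1) * tanh t * pt u t y := by
    unfold Ha at hH
    linarith
  refine (((hasDerivAt_rpow_const (Or.inl (ne_of_gt hy))).mul (hasDerivAt_py_snd hu hy)).mul
    (hasDerivAt_pt_snd hu hy)).congr_deriv ?_
  rw [Pi.mul_apply, hpyy, rpow_sub_one (ne_of_gt hy)]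
  ring

theorem integral_rpow_mul_pt_ptt_sub_py_pty {n : ℕ} {t L : ℝ}
    (hH : ∀ y : ℝ, 0 < y → Ha n a u t y = 0) (hg : IntegrableOn g (Ioi 0))
    (hbound : ∀ y : ℝ, 0 < y → y ^ a * (|pt u t y| ^ 2 + |py u t y| ^ 2 +
      |pt u t y| * |ptt u t y| + |py u t y| * |pty u t y|) ≤ g y)
    (hzero : Tendsto (fun y => y ^ a * py u t y * pt u t y) (𝓝[>] 0) (𝓝 L))
    (htop : Tendsto (fun y => y ^ a * py u t y * pt u t y) atTop (𝓝 0)) :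
    ∫ y in Ioi 0, y ^ a * (pt u t y * ptt u t y - py u t y * pty u t y) =
      L - ((n : ℝ) - 1) * tanh t * ∫ y in Ioi 0, y ^ a * pt u t y ^ 2 := by
  have hint₁ : IntegrableOn (fun y => y ^ a * (pt u t y * ptt u t y - py u t y * pty u t y))
      (Ioi 0) :=
    .of_continuousOn_of_abs_le measurableSet_Ioi hg ((continuousOn_rpow_const_Ioi a).mul
      (((continuousOn_pt hu).mul (continuousOn_ptt hu)).sub
        ((continuousOn_py hu).mul (continuousOn_pty hu)))) fun y hy =>
      (abs_mul_mul_sub_mul_le (rpow_nonneg (le_of_lt hy) a)).trans (hbound y hy)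
  have hint₂ : IntegrableOn (fun y => y ^ a * pt u t y ^ 2) (Ioi 0) :=
    .of_continuousOn_of_abs_le measurableSet_Ioi hg
      ((continuousOn_rpow_const_Ioi a).mul ((continuousOn_pt hu).pow 2)) fun y hy =>
      (abs_mul_sq_le (rpow_nonneg (le_of_lt hy) a)).trans (hbound y hy)
  have hftc := integral_Ioi_of_hasDerivAt_of_tendsto_nhdsGT
    (fun y hy => hasDerivAt_rpow_mul_py_mul_pt hu hy (hH y hy))
    (hint₁.add (hint₂.const_mul _)).neg hzero htop
  rw [integral_neg, integral_add hint₁ (hint₂.const_mul _), integral_const_mul] at hftc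
  linarith

end WeightedEnergy

theorem stmt7_general (n : ℕ) (γ : ℝ)
    (F : ℝ → ℝ) (hFs : ContDiff ℝ (⊤ : ℕ∞) F) (u : ℝ → ℝ → ℝ)
    (hsm : ContDiffOn ℝ 3 (fun p : ℝ × ℝ => u p.1 p.2) {p : ℝ × ℝ | 0 < p.2})
    (heq : ∀ t y : ℝ, 0 < y → Ha n (1 - 2*γ) u t y = 0)
    (htr : Differentiable ℝ (fun t => u t 0))
    (hbc2 : ∀ t : ℝ, Tendsto (fun y : ℝ => y ^ (1 - 2*γ) * py u t y * pt u t y)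
      atTop (𝓝 0))
    (hbc3 : ∀ t : ℝ, Tendsto (fun y : ℝ => y ^ (1 - 2*γ) * py u t y * pt u t y)
      (𝓝[>] (0:ℝ)) (𝓝 ((1 / dgamma γ) * deriv F (u t 0) * pt u t 0)))
    (hdom : ∀ c d : ℝ, ∃ g : ℝ → ℝ, IntegrableOn g (Set.Ioi 0) ∧
      ∀ t ∈ Set.Icc c d, ∀ y : ℝ, 0 < y →
        y ^ (1 - 2*γ) * (|pt u t y| ^ 2 + |py u t y| ^ 2 + |pt u t y| * |ptt u t y|
          + |py u t y| * |pty u t y|) ≤ g y) :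
    ∀ t : ℝ, HasDerivAt (Vham (1 - 2*γ) (dgamma γ) F u)
      (-(((n : ℝ) - 1)) * Real.tanh t * ∫ y in Set.Ioi (0:ℝ), y ^ (1 - 2*γ) * (pt u t y) ^ 2)
      t := by
  intro t
  have hu : ContDiffOn ℝ 2 (Function.uncurry u) {p : ℝ × ℝ | 0 < p.2} :=
    hsm.of_le (by norm_num)
  obtain ⟨g, hg, hbound⟩ := hdom (t - 1) (t + 1)
  have henergy := hasDerivAt_integral_rpow_mul_sq_sub_sq hu
    (Icc_mem_nhds (sub_one_lt t) (lt_add_one t)) hg hbound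
  have hflux := integral_rpow_mul_pt_ptt_sub_py_pty hu (heq t) hg
    (hbound t ⟨(sub_one_lt t).le, (lt_add_one t).le⟩) (hbc3 t) (hbc2 t)
  have htrace : HasDerivAt (fun s => F (u s 0)) (deriv F (u t 0) * pt u t 0) t :=
    (hFs.differentiable (by simp) _).hasDerivAt.comp t (htr t).hasDerivAt
  refine ((henergy.const_mul (1 / 2)).sub
    ((htrace.sub_const (F 1)).const_mul (1 / dgamma γ))).congr_deriv ?_
  rw [hflux]
  ring

/-- Dissipation of the Hamiltonian: under the stated decay and domination hypotheses,
`V` is differentiable with `V'(t) = -(n-1) tanh t ∫₀^∞ y^a (∂_t u)² dy`.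
Here the boundary condition is `lim_{y→0⁺} y^a ∂_y u = -(1/d_γ) f(u(t,0))` with
`f = -F'`, i.e. the limit equals `(1/d_γ) F'(u(t,0))`. -/
theorem stmt7 (n : ℕ) (hn : 2 ≤ n) (γ : ℝ) (hγ : γ ∈ Set.Ioo (0:ℝ) 1)
    (F : ℝ → ℝ) (hFs : ContDiff ℝ (⊤ : ℕ∞) F) (u : ℝ → ℝ → ℝ)
    (hsm : ContDiffOn ℝ 3 (fun p : ℝ × ℝ => u p.1 p.2) {p : ℝ × ℝ | 0 < p.2})
    (heq : ∀ t y : ℝ, 0 < y → Ha n (1 - 2*γ) u t y = 0)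
    (hcont : ContinuousOn (fun p : ℝ × ℝ => u p.1 p.2) {p : ℝ × ℝ | 0 ≤ p.2})
    (hptc : ContinuousOn (fun p : ℝ × ℝ => pt u p.1 p.2) {p : ℝ × ℝ | 0 ≤ p.2})
    (htr : Differentiable ℝ (fun t => u t 0))
    (hbc1 : ∀ t : ℝ, Tendsto (fun y : ℝ => y ^ (1 - 2*γ) * py u t y) (𝓝[>] (0:ℝ))
      (𝓝 ((1 / dgamma γ) * deriv F (u t 0))))
    (hbc2 : ∀ t : ℝ, Tendsto (fun y : ℝ => y ^ (1 - 2*γ) * py u t y * pt u t y)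
      atTop (𝓝 0))
    (hbc3 : ∀ t : ℝ, Tendsto (fun y : ℝ => y ^ (1 - 2*γ) * py u t y * pt u t y)
      (𝓝[>] (0:ℝ)) (𝓝 ((1 / dgamma γ) * deriv F (u t 0) * pt u t 0)))
    (hdom : ∀ c d : ℝ, ∃ g : ℝ → ℝ, IntegrableOn g (Set.Ioi 0) ∧
      ∀ t ∈ Set.Icc c d, ∀ y : ℝ, 0 < y →
        y ^ (1 - 2*γ) * (|pt u t y| ^ 2 + |py u t y| ^ 2 + |pt u t y| * |ptt u t y|
          + |py u t y| * |pty u t y|) ≤ g y) :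
    ∀ t : ℝ, HasDerivAt (Vham (1 - 2*γ) (dgamma γ) F u)
      (-(((n : ℝ) - 1)) * Real.tanh t * ∫ y in Set.Ioi (0:ℝ), y ^ (1 - 2*γ) * (pt u t y) ^ 2)
      t :=
  stmt7_general n γ F hFs u hsm heq htr hbc2 hbc3 hdom
end

section
/- Let n ≥ 2 be an integer, F : ℝ → ℝ smooth, f = −F′, and let w : ℝ → ℝ be a bounded C² function satisfying −w″(t) − (n−1) tanh(t) w′(t) = f(w(t)) for all t ∈ ℝ. Assume that w(t) → L⁺ and w′(t) → 0 as t → +∞, and that for every t ∈ ℝ the function s ↦ tanh(s)(w′(s))² is integrable on (t,∞). Then for every t ∈ ℝ, (1/2)(w′(t))² − (n−1) ∫_t^∞ tanh(s)(w′(s))² ds = F(w(t)) − F(L⁺). -/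
open Real Filter MeasureTheory Set Topology

/-! Along a solution of `w'' + a w' = F'(w)` the energy `E = F(w) - w'²/2` satisfies
`E' = a w'²`. With `a = (n-1) tanh`, integrating `E'` over `(t, ∞)` and using
`E(s) → F(L⁺)` gives the identity. -/

section DampedEnergy

variable {F F' w w' w'' a : ℝ → ℝ}

theorem hasDerivAt_energy_of_damped (hF : ∀ y, HasDerivAt F (F' y) y)
    (hw : ∀ s, HasDerivAt w (w' s) s) (hw' : ∀ s, HasDerivAt w' (w'' s) s)
    (heq : ∀ s, w'' s + a s * w' s = F' (w s)) (s : ℝ) :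
    HasDerivAt (fun s => F (w s) - 1 / 2 * w' s ^ 2) (a s * w' s ^ 2) s := by
  have h := ((hF (w s)).comp s (hw s)).sub (((hw' s).pow 2).const_mul (1 / 2))
  refine h.congr_deriv ?_
  norm_num
  linear_combination (-w' s) * heq s

theorem half_sq_sub_integral_Ioi_eq_of_damped (hF : ∀ y, HasDerivAt F (F' y) y)
    (hw : ∀ s, HasDerivAt w (w' s) s) (hw' : ∀ s, HasDerivAt w' (w'' s) s)
    (heq : ∀ s, w'' s + a s * w' s = F' (w s)) {L : ℝ}
    (hlim : Tendsto w atTop (𝓝 L)) (hlim' : Tendsto w' atTop (𝓝 0)) {t : ℝ}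
    (hint : IntegrableOn (fun s => a s * w' s ^ 2) (Ioi t)) :
    1 / 2 * w' t ^ 2 - ∫ s in Ioi t, a s * w' s ^ 2 = F (w t) - F L := by
  have hlimE : Tendsto (fun s => F (w s) - 1 / 2 * w' s ^ 2) atTop (𝓝 (F L)) := by
    have h := ((hF L).continuousAt.tendsto.comp hlim).sub ((hlim'.pow 2).const_mul (1 / 2))
    simpa using h
  have := integral_Ioi_of_hasDerivAt_of_tendsto'
    (fun s _ => hasDerivAt_energy_of_damped hF hw hw' heq s) hint hlimE
  linarith

end DampedEnergy

theorem stmt10_general (n : ℕ) (F : ℝ → ℝ) (hFs : ContDiff ℝ (⊤ : ℕ∞) F)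
    (w : ℝ → ℝ) (hw : ContDiff ℝ 2 w)
    (heq : ∀ t : ℝ, -(deriv (deriv w) t) - ((n : ℝ) - 1) * Real.tanh t * deriv w t
      = -(deriv F (w t)))
    (Lp : ℝ) (hlim : Tendsto w atTop (𝓝 Lp)) (hlim' : Tendsto (deriv w) atTop (𝓝 0))
    (hint : ∀ t : ℝ, IntegrableOn (fun s => Real.tanh s * (deriv w s) ^ 2) (Set.Ioi t)) :
    ∀ t : ℝ, (1/2) * (deriv w t) ^ 2
        - ((n : ℝ) - 1) * (∫ s in Set.Ioi t, Real.tanh s * (deriv w s) ^ 2)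
      = F (w t) - F Lp := by
  intro t
  have hF : ∀ y, HasDerivAt F (deriv F y) y :=
    fun y => (hFs.differentiable (by simp) y).hasDerivAt
  have hw1 : ∀ s, HasDerivAt w (deriv w s) s :=
    fun s => (hw.differentiable (by norm_num) s).hasDerivAt
  have hw2 : ∀ s, HasDerivAt (deriv w) (deriv (deriv w) s) s :=
    fun s => ((hw.iterate_deriv' 1 1).differentiable one_ne_zero s).hasDerivAt
  have key := half_sq_sub_integral_Ioi_eq_of_damped (a := fun s => ((n : ℝ) - 1) * tanh s)
    hF hw1 hw2 (fun s => by linarith [heq s]) hlim hlim'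
    (by simpa only [mul_assoc, IntegrableOn] using (hint t).const_mul ((n : ℝ) - 1))
  simpa only [mul_assoc, integral_const_mul] using key

/-- Hamiltonian-type identity for the one-dimensional equation
`-w'' - (n-1) tanh t · w' = f(w)` with `f = -F'`: for every `t`,
`(1/2)(w'(t))² - (n-1)∫_t^∞ tanh s (w'(s))² ds = F(w(t)) - F(L⁺)`. -/
theorem stmt10 (n : ℕ) (hn : 2 ≤ n) (F : ℝ → ℝ) (hFs : ContDiff ℝ (⊤ : ℕ∞) F)
    (w : ℝ → ℝ) (hw : ContDiff ℝ 2 w) (hb : ∃ M : ℝ, ∀ t : ℝ, |w t| ≤ M)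
    (heq : ∀ t : ℝ, -(deriv (deriv w) t) - ((n : ℝ) - 1) * Real.tanh t * deriv w t
      = -(deriv F (w t)))
    (Lp : ℝ) (hlim : Tendsto w atTop (𝓝 Lp)) (hlim' : Tendsto (deriv w) atTop (𝓝 0))
    (hint : ∀ t : ℝ, IntegrableOn (fun s => Real.tanh s * (deriv w s) ^ 2) (Set.Ioi t)) :
    ∀ t : ℝ, (1/2) * (deriv w t) ^ 2
        - ((n : ℝ) - 1) * (∫ s in Set.Ioi t, Real.tanh s * (deriv w s) ^ 2)
      = F (w t) - F Lp :=
  stmt10_general n F hFs w hw heq Lp hlim hlim' hint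
end
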